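/- The poset 𝔹(π⃗, f) is ω₁-closed. In fact, if ⟨p_n : n < ω⟩ is a ≤-descending sequence of conditions in 𝔹(π⃗, f) with each p_n = (h_n, I_n), then the pair (⋃_n h_n, ⋃_n I_n) is a condition in 𝔹(π⃗, f) and is the greatest lower bound of ⟨p_n : n < ω⟩. -/

import Mathlib

noncomputable section

abbrev Ordi : Type 1 := Ordinal.{0}

/-- The ordinal `ω₁`. -/
def w1 : Ordi := (Cardinal.aleph 1).ord

/-- The ordinal `ω₂`. -/
def w2 : Ordi := (Cardinal.aleph 2).ord

/-- `S²₁`: the set of ordinals below `ω₂` of cofinality `ω₁`. -/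
def S21 : Set Ordi := {α | α < w2 ∧ Ordinal.cof α = Cardinal.aleph 1}

/-- A condition in the poset `𝔹(π⃗, f)`: a pair `(h, I)` where `h` is an
injective partial function on `ω₂` (represented by a total function `h`
together with its domain `dom`) with countable domain, fixing no point of its
domain, and `I` is a countable subset of `S²₁` each of whose members is closed
under `h` and `h⁻¹`.  (Membership in the poset does not depend on `π⃗` or `f`.) -/
structure BCond where
  dom : Set Ordi
  h : Ordi → Ordi
  I : Set Ordi
  dom_countable : dom.Countable
  dom_subset : dom ⊆ Set.Iio w2
  mapsTo : ∀ α ∈ dom, h α < w2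
  injOn : Set.InjOn h dom
  ne_self : ∀ α ∈ dom, h α ≠ α
  I_countable : I.Countable
  I_subset : I ⊆ S21
  closed : ∀ β ∈ I, ∀ α ∈ dom, (α < β → h α < β) ∧ (h α < β → α < β)

/-- The order on `𝔹(π⃗, f)`: `q ≤ p` iff `h_p ⊆ h_q`, `I_p ⊆ I_q`, and the
oscillation requirements (c)(i) and (c)(ii) hold for every new point of the
domain below a member of `I_p`. -/
def BLe (pi : Ordi → Ordi → Ordi) (f : Ordi → Ordi) (q p : BCond) : Prop :=
  (p.dom ⊆ q.dom ∧ ∀ α ∈ p.dom, q.h α = p.h α) ∧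
  p.I ⊆ q.I ∧
  ∀ α ∈ q.dom, α ∉ p.dom → ∀ β ∈ p.I, α < β →
    (f (min (pi β α) (pi β (q.h α))) < max (pi β α) (pi β (q.h α))) ∧
    (∀ γ ∈ q.dom, γ < β → γ ≠ α →
      f (min (pi β (q.h γ)) (pi β (q.h α))) < max (pi β (q.h γ)) (pi β (q.h α)))

def BCond.Extends (q p : BCond) : Prop :=
  p.dom ⊆ q.dom ∧ (∀ α ∈ p.dom, q.h α = p.h α) ∧ p.I ⊆ q.I

theorem BLe.extends {pi : Ordi → Ordi → Ordi} {f : Ordi → Ordi} {q p : BCond}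
    (h : BLe pi f q p) : q.Extends p :=
  ⟨h.1.1, h.1.2, h.2.1⟩

theorem BLe_refl (pi : Ordi → Ordi → Ordi) (f : Ordi → Ordi) (p : BCond) : BLe pi f p p :=
  ⟨⟨subset_rfl, fun _ _ => rfl⟩, subset_rfl, fun _ hα hα' => absurd hα hα'⟩

theorem BLe_trans {pi : Ordi → Ordi → Ordi} {f : Ordi → Ordi} {r q p : BCond}
    (hrq : BLe pi f r q) (hqp : BLe pi f q p) : BLe pi f r p := by
  obtain ⟨⟨hdom_rq, hh_rq⟩, hI_rq, hnew_rq⟩ := hrq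
  obtain ⟨⟨hdom_qp, hh_qp⟩, hI_qp, hnew_qp⟩ := hqp
  refine ⟨⟨hdom_qp.trans hdom_rq,
      fun α hα => (hh_rq α (hdom_qp hα)).trans (hh_qp α hα)⟩,
    hI_qp.trans hI_rq, fun α hα hαp β hβ hαβ => ?_⟩
  by_cases hαq : α ∈ q.dom
  case neg => exact hnew_rq α hα hαq β (hI_qp hβ) hαβ
  obtain ⟨hosc, hpair⟩ := hnew_qp α hαq hαp β hβ hαβ
  refine ⟨hh_rq α hαq ▸ hosc, fun γ hγ hγβ hγα => ?_⟩
  by_cases hγq : γ ∈ q.dom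
  · rw [hh_rq α hαq, hh_rq γ hγq]
    exact hpair γ hγq hγβ hγα
  · -- `γ` is new for `r ≤ q`, so the pair requirement holds with `α`, `γ` swapped
    have := (hnew_rq γ hγ hγq β (hI_qp hβ) hγβ).2 α (hdom_rq hαq) hαβ (Ne.symm hγα)
    rwa [min_comm, max_comm] at this

theorem BLe_of_forall_succ {pi : Ordi → Ordi → Ordi} {f : Ordi → Ordi} {p : ℕ → BCond}
    (hdesc : ∀ n : ℕ, BLe pi f (p (n + 1)) (p n)) {n m : ℕ} (hnm : n ≤ m) :
    BLe pi f (p m) (p n) := by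
  induction m, hnm using Nat.le_induction with
  | base => exact BLe_refl pi f (p n)
  | succ m _ ih => exact BLe_trans (hdesc m) ih

namespace BCond

section iUnion

variable {p : ℕ → BCond} (hp : ∀ {n m : ℕ}, n ≤ m → (p m).Extends (p n))

include hp in
theorem exists_mem_dom_of_mem_iUnion {α γ : Ordi} (hα : α ∈ ⋃ n, (p n).dom)
    (hγ : γ ∈ ⋃ n, (p n).dom) (n : ℕ) :
    ∃ K, n ≤ K ∧ α ∈ (p K).dom ∧ γ ∈ (p K).dom := by
  obtain ⟨a, ha⟩ := Set.mem_iUnion.1 hα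
  obtain ⟨c, hc⟩ := Set.mem_iUnion.1 hγ
  refine ⟨max n (max a c), le_max_left _ _, (hp ?_).1 ha, (hp ?_).1 hc⟩ <;> omega

open Classical in
/-- Off `⋃ n, (p n).dom` the value is junk. -/
def iUnionH (p : ℕ → BCond) (α : Ordi) : Ordi :=
  if hα : ∃ n, α ∈ (p n).dom then (p hα.choose).h α else α

include hp in
theorem iUnionH_eq {n : ℕ} {α : Ordi} (hα : α ∈ (p n).dom) : iUnionH p α = (p n).h α := by
  have hex : ∃ n, α ∈ (p n).dom := ⟨n, hα⟩
  rw [iUnionH, dif_pos hex]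
  rcases le_total hex.choose n with h | h
  · exact ((hp h).2.1 α hex.choose_spec).symm
  · exact (hp h).2.1 α hα

def iUnion : BCond where
  dom := ⋃ n, (p n).dom
  h := iUnionH p
  I := ⋃ n, (p n).I
  dom_countable := Set.countable_iUnion fun n => (p n).dom_countable
  dom_subset := Set.iUnion_subset fun n => (p n).dom_subset
  mapsTo α hα := by
    obtain ⟨n, hn⟩ := Set.mem_iUnion.1 hα
    exact iUnionH_eq hp hn ▸ (p n).mapsTo α hn
  injOn α hα γ hγ hαγ := by
    obtain ⟨K, -, hαK, hγK⟩ := exists_mem_dom_of_mem_iUnion hp hα hγ 0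
    rw [iUnionH_eq hp hαK, iUnionH_eq hp hγK] at hαγ
    exact (p K).injOn hαK hγK hαγ
  ne_self α hα := by
    obtain ⟨n, hn⟩ := Set.mem_iUnion.1 hα
    exact iUnionH_eq hp hn ▸ (p n).ne_self α hn
  I_countable := Set.countable_iUnion fun n => (p n).I_countable
  I_subset := Set.iUnion_subset fun n => (p n).I_subset
  closed β hβ α hα := by
    obtain ⟨n, hn⟩ := Set.mem_iUnion.1 hβ
    obtain ⟨K, hnK, hαK, -⟩ := exists_mem_dom_of_mem_iUnion hp hα hα n
    exact iUnionH_eq hp hαK ▸ (p K).closed β ((hp hnK).2.2 hn) α hαK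

theorem iUnion_h_eq {n : ℕ} {α : Ordi} (hα : α ∈ (p n).dom) :
    (iUnion hp).h α = (p n).h α :=
  iUnionH_eq hp hα

theorem iUnion_BLe {pi : Ordi → Ordi → Ordi} {f : Ordi → Ordi}
    (hle : ∀ {n m : ℕ}, n ≤ m → BLe pi f (p m) (p n)) (n : ℕ) :
    BLe pi f (iUnion fun hnm => (hle hnm).extends) (p n) := by
  refine ⟨⟨Set.subset_iUnion (fun k => (p k).dom) n, fun α hα => iUnion_h_eq _ hα⟩,
    Set.subset_iUnion (fun k => (p k).I) n, fun α hα hαn β hβ hαβ => ?_⟩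
  -- each requirement involves at most two points of `⋃ n, (p n).dom`,
  -- which already lie in some `(p K).dom`
  have hp : ∀ {n m : ℕ}, n ≤ m → (p m).Extends (p n) := fun h => (hle h).extends
  obtain ⟨K, hnK, hαK, -⟩ := exists_mem_dom_of_mem_iUnion hp hα hα n
  refine ⟨iUnion_h_eq _ hαK ▸ ((hle hnK).2.2 α hαK hαn β hβ hαβ).1,
    fun γ hγ hγβ hγα => ?_⟩
  obtain ⟨K, hnK, hαK, hγK⟩ := exists_mem_dom_of_mem_iUnion hp hα hγ n
  rw [iUnion_h_eq _ hαK, iUnion_h_eq _ hγK]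
  exact ((hle hnK).2.2 α hαK hαn β hβ hαβ).2 γ hγK hγβ hγα

theorem BLe_iUnion {pi : Ordi → Ordi → Ordi} {f : Ordi → Ordi} {r : BCond}
    (hr : ∀ n, BLe pi f r (p n)) : BLe pi f r (iUnion hp) := by
  refine ⟨⟨Set.iUnion_subset fun n => (hr n).1.1, fun α hα => ?_⟩,
    Set.iUnion_subset fun n => (hr n).2.1, fun α hα hαq β hβ hαβ => ?_⟩
  · obtain ⟨n, hn⟩ := Set.mem_iUnion.1 hα
    exact ((hr n).1.2 α hn).trans (iUnion_h_eq hp hn).symm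
  · obtain ⟨n, hn⟩ := Set.mem_iUnion.1 hβ
    exact (hr n).2.2 α hα (fun h => hαq (Set.mem_iUnion.2 ⟨n, h⟩)) β hn hαβ

end iUnion

end BCond

theorem BCond_omega1_closed_general (pi : Ordi → Ordi → Ordi) (f : Ordi → Ordi)
    (p : ℕ → BCond) (hdesc : ∀ n : ℕ, BLe pi f (p (n + 1)) (p n)) :
    ∃ q : BCond,
      q.dom = ⋃ n : ℕ, (p n).dom ∧
      q.I = ⋃ n : ℕ, (p n).I ∧
      (∀ n : ℕ, ∀ α ∈ (p n).dom, q.h α = (p n).h α) ∧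
      (∀ n : ℕ, BLe pi f q (p n)) ∧
      (∀ r : BCond, (∀ n : ℕ, BLe pi f r (p n)) → BLe pi f r q) :=
  have hle : ∀ {n m : ℕ}, n ≤ m → BLe pi f (p m) (p n) := BLe_of_forall_succ hdesc
  ⟨BCond.iUnion fun hnm => (hle hnm).extends, rfl, rfl, fun _ _ hα => BCond.iUnion_h_eq _ hα,
    BCond.iUnion_BLe hle, fun _ => BCond.BLe_iUnion _⟩

/-- `𝔹(π⃗, f)` is `ω₁`-closed: the union of a descending `ω`-sequence of
conditions is a condition, and it is the greatest lower bound of the sequence. -/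
theorem BCond_omega1_closed (pi : Ordi → Ordi → Ordi) (f : Ordi → Ordi)
    (hpi : ∀ β, w1 ≤ β → β < w2 → Set.BijOn (pi β) (Set.Iio β) (Set.Iio w1))
    (hf_maps : ∀ i < w1, f i < w1) (hf_inj : Set.InjOn f (Set.Iio w1))
    (p : ℕ → BCond) (hdesc : ∀ n : ℕ, BLe pi f (p (n + 1)) (p n)) :
    ∃ q : BCond,
      q.dom = ⋃ n : ℕ, (p n).dom ∧
      q.I = ⋃ n : ℕ, (p n).I ∧
      (∀ n : ℕ, ∀ α ∈ (p n).dom, q.h α = (p n).h α) ∧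
      (∀ n : ℕ, BLe pi f q (p n)) ∧
      (∀ r : BCond, (∀ n : ℕ, BLe pi f r (p n)) → BLe pi f r q) :=
  BCond_omega1_closed_general pi f p hdesc

end
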